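/- arXiv:1109.3739 — 2 statements merged into one kernel-verified Lean document; each statement's English description precedes it below -/
import Mathlib

section
/- Let A be an m×n matrix over a ring, I : {1,...,k} → {1,...,m} and J : {1,...,l} → {1,...,n} injective index maps, and B a k×l matrix. Define R (m×k) by R(I(i), i) = 1, Q (l×n) by Q(j, J(j)) = 1, S (m×m) diagonal with S(I(i),I(i)) = 1 for all i and zero elsewhere, and T (n×n) diagonal with T(J(j),J(j)) = 1 for all j and zero elsewhere. Then the matrix C = A + R·B·Q − S·A·T satisfies C(I(i), J(j)) = B(i,j) for all i,j, and C(r,c) = A(r,c) whenever r is not in the image of I or c is not in the image of J. -/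
/-!
`R` scatters the rows of a matrix to the positions `I` and `Q` scatters its columns to the
positions `J`, so by injectivity `R * B * Q` is `B` placed on the block `I × J` and zero
elsewhere, while the diagonal 0/1 masks `S` and `T` cut `S * A * T` down to the block of `A`
on `I × J`. Adding the first and subtracting the second swaps that block of `A` for `B`.
-/

open Matrix Set Function

namespace Matrix

variable {α β γ 𝕜 : Type*} [Semiring 𝕜] [Fintype β] [DecidableEq α] {I : β → α}

section ScatterRows

variable {R : Matrix α β 𝕜} (hR : ∀ r i, R r i = if r = I i then 1 else 0)
include hR

theorem scatter_mul_apply_image (hI : Injective I) (M : Matrix β γ 𝕜) (i : β) (c : γ) :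
    (R * M) (I i) c = M i c := by
  rw [mul_apply, Fintype.sum_eq_single i fun x hx => by simp [hR, hI.ne hx.symm]]
  simp [hR]

theorem scatter_mul_apply_of_notMem_range {r : α} (hr : r ∉ range I) (M : Matrix β γ 𝕜)
    (c : γ) : (R * M) r c = 0 := by
  refine Finset.sum_eq_zero fun i _ => ?_
  simp [hR, show r ≠ I i from fun h => hr ⟨i, h.symm⟩]

end ScatterRows

section ScatterColumns

variable {Q : Matrix β α 𝕜} (hQ : ∀ j c, Q j c = if c = I j then 1 else 0)
include hQ

theorem mul_scatter_apply_image (hI : Injective I) (M : Matrix γ β 𝕜) (r : γ) (j : β) :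
    (M * Q) r (I j) = M r j := by
  rw [mul_apply, Fintype.sum_eq_single j fun x hx => by simp [hQ, hI.ne hx.symm]]
  simp [hQ]

theorem mul_scatter_apply_of_notMem_range {c : α} (hc : c ∉ range I) (M : Matrix γ β 𝕜)
    (r : γ) : (M * Q) r c = 0 := by
  refine Finset.sum_eq_zero fun j _ => ?_
  simp [hQ, show c ≠ I j from fun h => hc ⟨j, h.symm⟩]

end ScatterColumns

theorem eq_diagonal_of_apply_eq_ite {s : Set α} [DecidablePred (· ∈ s)] {S : Matrix α α 𝕜}
    (hS : ∀ r r', S r r' = if r = r' ∧ r ∈ s then 1 else 0) :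
    S = diagonal fun r => if r ∈ s then 1 else 0 := by
  ext r r'
  by_cases h : r = r' <;> simp [hS, h]

theorem mask_mul_mul_mask_apply {δ : Type*} [Fintype α] [Fintype δ] [DecidableEq δ]
    {s : Set α} {t : Set δ} [DecidablePred (· ∈ s)] [DecidablePred (· ∈ t)]
    {S : Matrix α α 𝕜} {T : Matrix δ δ 𝕜}
    (hS : ∀ r r', S r r' = if r = r' ∧ r ∈ s then 1 else 0)
    (hT : ∀ c c', T c c' = if c = c' ∧ c ∈ t then 1 else 0) (A : Matrix α δ 𝕜) (r : α) (c : δ) :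
    (S * A * T) r c = if r ∈ s ∧ c ∈ t then A r c else 0 := by
  rw [eq_diagonal_of_apply_eq_ite hS, eq_diagonal_of_apply_eq_ite hT, mul_diagonal, diagonal_mul]
  split_ifs <;> simp_all

end Matrix

/-- Correctness of SpAsgn: C = A + R·B·Q − S·A·T assigns B to A(I,J) and leaves
the rest of A unchanged. -/
theorem spasgn_correct {𝕜 : Type*} [CommRing 𝕜] {m n k l : ℕ}
    (A : Matrix (Fin m) (Fin n) 𝕜) (B : Matrix (Fin k) (Fin l) 𝕜)
    (I : Fin k → Fin m) (J : Fin l → Fin n)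
    (hI : Function.Injective I) (hJ : Function.Injective J)
    (R : Matrix (Fin m) (Fin k) 𝕜) (Q : Matrix (Fin l) (Fin n) 𝕜)
    (S : Matrix (Fin m) (Fin m) 𝕜) (T : Matrix (Fin n) (Fin n) 𝕜)
    (hR : ∀ r i, R r i = if r = I i then 1 else 0)
    (hQ : ∀ j c, Q j c = if c = J j then 1 else 0)
    (hS : ∀ r r', S r r' = if r = r' ∧ r ∈ Set.range I then 1 else 0)
    (hT : ∀ c c', T c c' = if c = c' ∧ c ∈ Set.range J then 1 else 0)
    (C : Matrix (Fin m) (Fin n) 𝕜) (hC : C = A + R * B * Q - S * A * T) :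
    (∀ i j, C (I i) (J j) = B i j) ∧
      (∀ r c, r ∉ Set.range I ∨ c ∉ Set.range J → C r c = A r c) := by
  subst hC
  refine ⟨fun i j => ?_, fun r c h => ?_⟩
  · rw [Matrix.sub_apply, Matrix.add_apply, mask_mul_mul_mask_apply hS hT,
      if_pos ⟨mem_range_self i, mem_range_self j⟩, Matrix.mul_assoc,
      scatter_mul_apply_image hR hI, mul_scatter_apply_image hQ hJ, add_sub_cancel_left]
  · have hRBQ : (R * B * Q) r c = 0 := by
      rcases h with hr | hc
      · rw [Matrix.mul_assoc, scatter_mul_apply_of_notMem_range hR hr]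
      · exact mul_scatter_apply_of_notMem_range hQ hc _ _
    rw [Matrix.sub_apply, Matrix.add_apply, mask_mul_mul_mask_apply hS hT, if_neg (by tauto),
      hRBQ, add_zero, sub_zero]
end

section
/- Let I and J be injective index maps with images of sizes k and l respectively, and let R, Q be the corresponding 0/1 extraction matrices. For any m×n matrix A over a field, flops(R·A) + flops((R·A)·Q) ≤ 2·nnz(A). Consequently the sequential SpRef algorithm via two sparse matrix products performs O(nnz(A)) nonzero arithmetic operations. -/
/-!
Every column of the extraction matrix `R` and every row of `Q` holds at most one nonzero, so
in `flops(X·Y) = Σₜ nzc(X,t)·nzr(Y,t)` each term is bounded by the count of nonzeros in one line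
of the other factor: `flops(R·A) ≤ nnz(A)` and `flops((R·A)·Q) ≤ nnz(R·A)`. Finally `R·A` is a
submatrix of `A` taken along an injective row map, so `nnz(R·A) ≤ nnz(A)`.
-/

open Finset

namespace Matrix

variable {ι κ ν α : Type*} [Fintype ι] [Fintype κ] [Fintype ν] [Zero α] [DecidableEq α]

-- `colNnz` and `rowNnz` are the paper's `nzc` and `nzr`.
def colNnz (X : Matrix ι κ α) (t : κ) : ℕ := #{i | X i t ≠ 0}

def rowNnz (Y : Matrix κ ν α) (t : κ) : ℕ := #{j | Y t j ≠ 0}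

def nnz (A : Matrix ι κ α) : ℕ := #{p : ι × κ | A p.1 p.2 ≠ 0}

def flops (X : Matrix ι κ α) (Y : Matrix κ ν α) : ℕ := ∑ t, X.colNnz t * Y.rowNnz t

theorem nnz_eq_sum_rowNnz (A : Matrix ι κ α) : A.nnz = ∑ t, A.rowNnz t := by
  simp only [nnz, rowNnz, card_filter, Fintype.sum_prod_type]

theorem nnz_eq_sum_colNnz (A : Matrix ι κ α) : A.nnz = ∑ t, A.colNnz t := by
  simp only [nnz, colNnz, card_filter, Fintype.sum_prod_type]
  exact sum_comm

theorem flops_le_nnz_right {X : Matrix ι κ α} (hX : ∀ t, X.colNnz t ≤ 1)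
    (Y : Matrix κ ν α) : X.flops Y ≤ Y.nnz := by
  rw [nnz_eq_sum_rowNnz]
  exact sum_le_sum fun t _ => mul_le_of_le_one_left (Nat.zero_le _) (hX t)

theorem flops_le_nnz_left (X : Matrix ι κ α) {Y : Matrix κ ν α}
    (hY : ∀ t, Y.rowNnz t ≤ 1) : X.flops Y ≤ X.nnz := by
  rw [nnz_eq_sum_colNnz]
  exact sum_le_sum fun t _ => mul_le_of_le_one_right (Nat.zero_le _) (hY t)

theorem nnz_submatrix_le {ι' κ' : Type*} [Fintype ι'] [Fintype κ'] (A : Matrix ι κ α)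
    {f : ι' → ι} {g : κ' → κ} (hf : Function.Injective f) (hg : Function.Injective g) :
    (A.submatrix f g).nnz ≤ A.nnz :=
  card_le_card_of_injOn (Prod.map f g)
    (fun _ hp => mem_filter.2 ⟨mem_univ _, (mem_filter.1 hp).2⟩)
    (hf.prodMap hg).injOn

end Matrix

theorem card_filter_ne_zero_le_one_of_injective {ι κ α : Type*} [Fintype κ] [Zero α]
    [DecidableEq α] {f : κ → ι} (hf : Function.Injective f) {t : ι} {v : κ → α}
    (hv : ∀ i, v i ≠ 0 → t = f i) : #{i | v i ≠ 0} ≤ 1 :=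
  card_le_one.2 fun a ha b hb =>
    hf <| (hv a (mem_filter.1 ha).2).symm.trans (hv b (mem_filter.1 hb).2)

/-- The two products of sequential SpRef take at most 2·nnz(A) flops. -/
theorem spref_flops {F : Type*} [Field F] [DecidableEq F] {m n k l : ℕ}
    (I : Fin k → Fin m) (J : Fin l → Fin n)
    (hI : Function.Injective I) (hJ : Function.Injective J)
    (R : Matrix (Fin k) (Fin m) F) (Q : Matrix (Fin n) (Fin l) F)
    (hR : ∀ i t, R i t = if t = I i then 1 else 0)
    (hQ : ∀ t j, Q t j = if t = J j then 1 else 0)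
    (A : Matrix (Fin m) (Fin n) F) :
    (∑ t : Fin m,
        (Finset.univ.filter fun i : Fin k => R i t ≠ 0).card *
          (Finset.univ.filter fun j : Fin n => A t j ≠ 0).card) +
      (∑ t : Fin n,
        (Finset.univ.filter fun i : Fin k => (R * A) i t ≠ 0).card *
          (Finset.univ.filter fun j : Fin l => Q t j ≠ 0).card) ≤
      2 * (Finset.univ.filter fun p : Fin m × Fin n => A p.1 p.2 ≠ 0).card := by
  have hRcol : ∀ t, R.colNnz t ≤ 1 := fun t =>
    card_filter_ne_zero_le_one_of_injective hI fun i h => (ite_ne_right_iff.1 (hR i t ▸ h)).1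
  have hQrow : ∀ t, Q.rowNnz t ≤ 1 := fun t =>
    card_filter_ne_zero_le_one_of_injective hJ fun j h => (ite_ne_right_iff.1 (hQ t j ▸ h)).1
  have hRA : R * A = A.submatrix I id := by
    ext i t
    simp [Matrix.mul_apply, hR]
  change R.flops A + (R * A).flops Q ≤ 2 * A.nnz
  calc R.flops A + (R * A).flops Q ≤ A.nnz + (R * A).nnz :=
        add_le_add (Matrix.flops_le_nnz_right hRcol A) (Matrix.flops_le_nnz_left _ hQrow)
    _ ≤ A.nnz + A.nnz := by
        rw [hRA]
        exact Nat.add_le_add_left (A.nnz_submatrix_le hI Function.injective_id) _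
    _ = 2 * A.nnz := (two_mul _).symm
end
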